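/- For all smooth functions p, q : ℝ → ℂ and all (x₁, x₂) ∈ ℝ², the operator Ω₁ + Ω₂ − (1/2) H₁H₂ − (C₁B₂ + B₁C₂) applied to the function (x₁,x₂) ↦ p(x₁)q(x₂) equals −x₁x₂ (p''(x₁)q(x₂) + 2p'(x₁)q'(x₂) + p(x₁)q''(x₂)) + (2x₁x₂ − 2k₁x₂ − 2k₂x₁)(p'(x₁)q(x₂) + p(x₁)q'(x₂)) + (2k₁x₂ + 2k₂x₁ − 2k₁k₂ − x₁x₂ + k₁(1−k₁) + k₂(1−k₂)) p(x₁)q(x₂). -/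

import Mathlib

noncomputable section

private lemma hdr' (x : ℝ) : HasDerivAt (fun x:ℝ => (x:ℂ)) 1 x := by
  simpa using (hasDerivAt_id x).ofReal_comp

/-- generic second-order operator with affine coefficients -/
def gop (a b c d e g : ℂ) (f : ℝ → ℂ) : ℝ → ℂ := fun x =>
  (a + b*x) * deriv (deriv f) x + (c + d*x) * deriv f x + (e + g*x) * f x

lemma gop_apply (a b c d e g : ℂ) (f : ℝ → ℂ) (x : ℝ) :
    gop a b c d e g f x =
      (a + b*x) * deriv (deriv f) x + (c + d*x) * deriv f x + (e + g*x) * f x := rfl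

private lemma deriv_aff_mul (a b : ℂ) {h : ℝ → ℂ} (hh : Differentiable ℝ h) (x : ℝ) :
    deriv (fun x : ℝ => (a + b*(x:ℂ)) * h x) x = b * h x + (a + b*x) * deriv h x := by
  have h1 : HasDerivAt (fun x:ℝ => a + b*(x:ℂ)) b x := by
    simpa using (hdr' x).const_mul b |>.const_add a
  rw [deriv_fun_mul h1.differentiableAt (hh x), h1.deriv]

private lemma diff_aff_mul (a b : ℂ) {h : ℝ → ℂ} (hh : Differentiable ℝ h) :
    Differentiable ℝ (fun x : ℝ => (a + b*(x:ℂ)) * h x) := by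
  have h1 : Differentiable ℝ (fun x:ℝ => a + b*(x:ℂ)) :=
    fun x => ((hdr' x).const_mul b |>.const_add a).differentiableAt
  exact h1.mul hh

lemma deriv_gop {a b c d e g : ℂ} {f : ℝ → ℂ} (hf : ContDiff ℝ (⊤ : ℕ∞) f) (x : ℝ) :
    deriv (gop a b c d e g f) x =
      (a + b*x) * deriv (deriv (deriv f)) x + (b + c + d*x) * deriv (deriv f) x
        + (d + e + g*x) * deriv f x + g * f x := by
  have hf0 : ContDiff ℝ ((⊤:ℕ∞):WithTop ℕ∞) f := hf.of_le (by simp)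
  have hf1 : ContDiff ℝ ((⊤:ℕ∞):WithTop ℕ∞) (deriv f) := (contDiff_infty_iff_deriv.mp hf0).2
  have hf2 : ContDiff ℝ ((⊤:ℕ∞):WithTop ℕ∞) (deriv (deriv f)) := (contDiff_infty_iff_deriv.mp hf1).2
  have d0 : Differentiable ℝ f := hf0.differentiable (by simp)
  have d1 : Differentiable ℝ (deriv f) := hf1.differentiable (by simp)
  have d2 : Differentiable ℝ (deriv (deriv f)) := hf2.differentiable (by simp)
  unfold gop
  rw [deriv_fun_add (((diff_aff_mul a b d2).fun_add (diff_aff_mul c d d1)) x)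
      ((diff_aff_mul e g d0) x),
    deriv_fun_add ((diff_aff_mul a b d2) x) ((diff_aff_mul c d d1) x),
    deriv_aff_mul a b d2, deriv_aff_mul c d d1, deriv_aff_mul e g d0]
  ring

lemma deriv2_gop {a b c d e g : ℂ} {f : ℝ → ℂ} (hf : ContDiff ℝ (⊤ : ℕ∞) f) (x : ℝ) :
    deriv (deriv (gop a b c d e g f)) x =
      (a + b*x) * deriv (deriv (deriv (deriv f))) x
        + (2*b + c + d*x) * deriv (deriv (deriv f)) x
        + (2*d + e + g*x) * deriv (deriv f) x + 2*g * deriv f x := by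
  have hf0 : ContDiff ℝ ((⊤:ℕ∞):WithTop ℕ∞) f := hf.of_le (by simp)
  have hf1 : ContDiff ℝ ((⊤:ℕ∞):WithTop ℕ∞) (deriv f) := (contDiff_infty_iff_deriv.mp hf0).2
  have hf2 : ContDiff ℝ ((⊤:ℕ∞):WithTop ℕ∞) (deriv (deriv f)) := (contDiff_infty_iff_deriv.mp hf1).2
  have hf3 : ContDiff ℝ ((⊤:ℕ∞):WithTop ℕ∞) (deriv (deriv (deriv f))) :=
    (contDiff_infty_iff_deriv.mp hf2).2
  have d1 : Differentiable ℝ (deriv f) := hf1.differentiable (by simp)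
  have d2 : Differentiable ℝ (deriv (deriv f)) := hf2.differentiable (by simp)
  have d3 : Differentiable ℝ (deriv (deriv (deriv f))) := hf3.differentiable (by simp)
  have h1 : deriv (gop a b c d e g f)
      = fun x => ((a + b*x) * deriv (deriv (deriv f)) x + ((b+c) + d*x) * deriv (deriv f) x
        + ((d+e) + g*x) * deriv f x) + g * f x := by
    funext y
    rw [deriv_gop hf y]
  rw [h1, deriv_fun_add (by exact (((diff_aff_mul a b d3).add
      (diff_aff_mul (b+c) d d2)).add (diff_aff_mul (d+e) g d1)) x)
      (((hf0.differentiable (by simp)).const_mul g) x),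
    deriv_fun_add (((diff_aff_mul a b d3).fun_add (diff_aff_mul (b+c) d d2)) x)
      ((diff_aff_mul (d+e) g d1) x),
    deriv_fun_add ((diff_aff_mul a b d3) x) ((diff_aff_mul (b+c) d d2) x),
    deriv_aff_mul a b d3, deriv_aff_mul (b+c) d d2, deriv_aff_mul (d+e) g d1,
    deriv_const_mul g ((hf0.differentiable (by simp)) x)]
  ring

/-- `H₁ = -2x∂² - 2(2k-x)∂ + 2k` (positive discrete series realization). -/
def opH (k : ℝ) (f : ℝ → ℂ) : ℝ → ℂ := fun x =>
  -2 * (x : ℂ) * deriv (deriv f) x - 2 * ((2 * k - x : ℝ) : ℂ) * deriv f x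
    + ((2 * k : ℝ) : ℂ) * f x

/-- `B₁ = -x∂² - 2(k-x)∂ + (2k-x)`. -/
def opB (k : ℝ) (f : ℝ → ℂ) : ℝ → ℂ := fun x =>
  -(x : ℂ) * deriv (deriv f) x - 2 * ((k - x : ℝ) : ℂ) * deriv f x + ((2 * k - x : ℝ) : ℂ) * f x

/-- `C₁ = x∂² + 2k∂`. -/
def opC (k : ℝ) (f : ℝ → ℂ) : ℝ → ℂ := fun x =>
  (x : ℂ) * deriv (deriv f) x + ((2 * k : ℝ) : ℂ) * deriv f x

/-- `H₂ = 2x∂² + 2(2k-x)∂ - 2k` (negative discrete series realization). -/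
def opH2 (k : ℝ) (f : ℝ → ℂ) : ℝ → ℂ := fun x =>
  2 * (x : ℂ) * deriv (deriv f) x + 2 * ((2 * k - x : ℝ) : ℂ) * deriv f x
    - ((2 * k : ℝ) : ℂ) * f x

/-- `Ω₁ = -(1/4)(H₁² + 2H₁ + 4C₁B₁)`, acting in the first variable; here
`B₂ = x∂² + 2k∂` has the shape of `opC` and `C₂ = -x∂² - 2(k-x)∂ + (2k-x)` that of `opB`. -/
def opOm1 (k : ℝ) (f : ℝ → ℂ) : ℝ → ℂ := fun x =>
  -(1/4 : ℂ) * (opH k (opH k f) x + 2 * opH k f x + 4 * opC k (opB k f) x)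

/-- `Ω₂ = -(1/4)(H₂² + 2H₂ + 4C₂B₂)`, acting in the second variable. -/
def opOm2 (k : ℝ) (f : ℝ → ℂ) : ℝ → ℂ := fun x =>
  -(1/4 : ℂ) * (opH2 k (opH2 k f) x + 2 * opH2 k f x + 4 * opB k (opC k f) x)

lemma opH_eq (k : ℝ) (f : ℝ → ℂ) : opH k f = gop 0 (-2) (-(4*k)) 2 (2*k) 0 f := by
  funext x; simp only [opH, gop]; push_cast; ring

lemma opB_eq (k : ℝ) (f : ℝ → ℂ) : opB k f = gop 0 (-1) (-(2*k)) 2 (2*k) (-1) f := by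
  funext x; simp only [opB, gop]; push_cast; ring

lemma opC_eq (k : ℝ) (f : ℝ → ℂ) : opC k f = gop 0 1 (2*k) 0 0 0 f := by
  funext x; simp only [opC, gop]; push_cast; ring

lemma opH2_eq (k : ℝ) (f : ℝ → ℂ) : opH2 k f = gop 0 2 (4*k) (-2) (-(2*k)) 0 f := by
  funext x; simp only [opH2, gop]; push_cast; ring

/-- the Casimir operator `Ω₁ + Ω₂ - (1/2)H₁H₂ - (C₁B₂ + B₁C₂)` of the tensor
product, applied to `p(x₁)q(x₂)` for smooth `p, q`, equals the stated second order
differential expression. -/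
theorem casimir_tensor_product_realization (k₁ k₂ : ℝ) (hk₁ : 0 < k₁) (hk₂ : 0 < k₂)
    (p q : ℝ → ℂ) (hp : ContDiff ℝ (⊤ : ℕ∞) p) (hq : ContDiff ℝ (⊤ : ℕ∞) q) (x₁ x₂ : ℝ) :
    opOm1 k₁ p x₁ * q x₂ + p x₁ * opOm2 k₂ q x₂
      - (1/2 : ℂ) * opH k₁ p x₁ * opH2 k₂ q x₂
      - (opC k₁ p x₁ * opC k₂ q x₂ + opB k₁ p x₁ * opB k₂ q x₂)
    = -(x₁ : ℂ) * (x₂ : ℂ) * (deriv (deriv p) x₁ * q x₂ + 2 * deriv p x₁ * deriv q x₂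
          + p x₁ * deriv (deriv q) x₂)
      + ((2 * x₁ * x₂ - 2 * k₁ * x₂ - 2 * k₂ * x₁ : ℝ) : ℂ) *
          (deriv p x₁ * q x₂ + p x₁ * deriv q x₂)
      + ((2 * k₁ * x₂ + 2 * k₂ * x₁ - 2 * k₁ * k₂ - x₁ * x₂
            + k₁ * (1 - k₁) + k₂ * (1 - k₂) : ℝ) : ℂ) * (p x₁ * q x₂) := by
  simp only [opOm1, opOm2, opH_eq, opB_eq, opC_eq, opH2_eq, gop_apply,
    deriv_gop hp, deriv2_gop hp, deriv_gop hq, deriv2_gop hq]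
  push_cast
  ring
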